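/- arXiv:2211.12354 — 7 statements merged into one kernel-verified Lean document; each statement's English description precedes it below -/
import Mathlib

section
/- The function g defined on the positive reals by g(x) = (x+1)·ln(1+1/x)/√(2x+1) is strictly decreasing on (0,∞). -/
/-!
Differentiating, `g' x = (x log (1 + 1/x) - 2 - 1/x) / (2x+1)^{3/2}`, and `log (1 + 1/x) ≤ 1/x`
bounds the numerator by `-1 - 1/x < 0`.
-/

open Real Set

lemma log_one_add_one_div_le_one_div {x : ℝ} (hx : 0 < x) : log (1 + 1 / x) ≤ 1 / x := by
  linarith [log_le_sub_one_of_pos (by positivity : 0 < 1 + 1 / x)]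

lemma hasDerivAt_add_one_mul_log_one_add_one_div {x : ℝ} (hx : 0 < x) :
    HasDerivAt (fun y => (y + 1) * log (1 + 1 / y)) (log (1 + 1 / x) - 1 / x) x := by
  have hlog : HasDerivAt (fun y => log (1 + 1 / y)) (-(x ^ 2)⁻¹ / (1 + 1 / x)) x := by
    have hinv : HasDerivAt (fun y => 1 + 1 / y) (-(x ^ 2)⁻¹) x := by
      simpa using (hasDerivAt_inv hx.ne').const_add 1
    exact hinv.log (by positivity)
  refine (((hasDerivAt_id' x).add_const 1).mul hlog).congr_deriv ?_
  field_simp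
  ring

lemma hasDerivAt_sqrt_two_mul_add_one {x : ℝ} (hx : 0 < 2 * x + 1) :
    HasDerivAt (fun y => √(2 * y + 1)) (1 / √(2 * x + 1)) x := by
  have hlin : HasDerivAt (fun y : ℝ => 2 * y + 1) 2 x := by
    simpa using ((hasDerivAt_id x).const_mul 2).add_const 1
  refine ((hasDerivAt_sqrt hx.ne').comp x hlin).congr_deriv ?_
  field_simp

lemma hasDerivAt_add_one_mul_log_one_add_one_div_div_sqrt {x : ℝ} (hx : 0 < x) :
    HasDerivAt (fun y => (y + 1) * log (1 + 1 / y) / √(2 * y + 1))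
      ((x * log (1 + 1 / x) - 2 - 1 / x) / ((2 * x + 1) * √(2 * x + 1))) x := by
  have hpos : 0 < 2 * x + 1 := by linarith
  have hs : 0 < √(2 * x + 1) := sqrt_pos.mpr hpos
  have hs2 : √(2 * x + 1) ^ 2 = 2 * x + 1 := sq_sqrt hpos.le
  refine ((hasDerivAt_add_one_mul_log_one_add_one_div hx).div
    (hasDerivAt_sqrt_two_mul_add_one hpos) hs.ne').congr_deriv ?_
  generalize log (1 + 1 / x) = L
  generalize √(2 * x + 1) = s at hs hs2 ⊢
  field_simp
  linear_combination x * (x + 1) * L * hs2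

/-- For `x > 0`, `g x = (x+1) * ln(1 + 1/x) / √(2x+1)` is strictly decreasing on `(0, ∞)`. -/
theorem g_strictAntiOn :
    StrictAntiOn (fun x : ℝ => (x + 1) * Real.log (1 + 1 / x) / Real.sqrt (2 * x + 1))
      (Set.Ioi (0 : ℝ)) := by
  have hderiv {x : ℝ} (hx : x ∈ Ioi 0) := hasDerivAt_add_one_mul_log_one_add_one_div_div_sqrt hx
  refine strictAntiOn_of_hasDerivWithinAt_neg (convex_Ioi 0)
    (fun x hx => (hderiv hx).continuousAt.continuousWithinAt)
    (fun x hx => (hderiv (interior_subset hx)).hasDerivWithinAt) (fun x hx => ?_)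
  have hx : 0 < x := interior_subset hx
  have hmul_log : x * log (1 + 1 / x) ≤ 1 :=
    calc x * log (1 + 1 / x) ≤ x * (1 / x) :=
          mul_le_mul_of_nonneg_left (log_one_add_one_div_le_one_div hx) hx.le
      _ = 1 := mul_one_div_cancel hx.ne'
  have hnum : x * log (1 + 1 / x) - 2 - 1 / x < 0 := by
    linarith [one_div_pos.mpr hx]
  exact div_neg_of_neg_of_pos hnum (by positivity)
end

section
/- Let α ≥ 0 and define f_α(x) = ln(1+1/x) − α·√(2x+1)/(x+1) for x > 0. Then f_α is decreasing on the set S_α = {x : x > 0 and g(x) ≥ α}, where g(x) = (x+1)·ln(1+1/x)/√(2x+1); that is, for all x, y ∈ S_α with x ≤ y one has f_α(y) ≤ f_α(x). -/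
/-!
Writing `c x = (x + 1) √(2x + 1) / x²` (`criticalPenalty`), one computes
`f_α' x = -1 / (x (x + 1)) + α x / (√(2x + 1) (x + 1)²)`, which is `≤ 0` exactly when `α ≤ c x`.
With `w = 1 + 1/x` one has `c x = w √(w² - 1)`, so `c` is decreasing on `(0, ∞)`; and
`log (1 + 1/x) ≤ 1/x` gives `g ≤ c`. Hence `α ≤ g y` forces `f_α' ≤ 0` on all of `(0, y]`.
-/

open Real Set

noncomputable def penalizedRate (α x : ℝ) : ℝ := log (1 + 1 / x) - α * √(2 * x + 1) / (x + 1)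

noncomputable def criticalPenalty (x : ℝ) : ℝ := (x + 1) * √(2 * x + 1) / x ^ 2

lemma hasDerivAt_log_one_add_one_div {x : ℝ} (h₀ : x ≠ 0) (h₁ : x + 1 ≠ 0) :
    HasDerivAt (fun t => log (1 + 1 / t)) (-1 / (x * (x + 1))) x := by
  have hw : 1 + x⁻¹ ≠ 0 := by rw [← one_div, one_add_div h₀]; exact div_ne_zero h₁ h₀
  convert ((hasDerivAt_inv h₀).const_add 1).log hw using 1
  · simp only [one_div]
  · field_simp

lemma hasDerivAt_sqrt_two_mul_add_one_div {x : ℝ} (hx : 0 < 2 * x + 1) :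
    HasDerivAt (fun t => √(2 * t + 1) / (t + 1)) (-x / (√(2 * x + 1) * (x + 1) ^ 2)) x := by
  have hsq : √(2 * x + 1) ^ 2 = 2 * x + 1 := sq_sqrt hx.le
  have hlin : HasDerivAt (fun t : ℝ => 2 * t + 1) 2 x := by
    simpa using ((hasDerivAt_id x).const_mul 2).add_const 1
  refine (hlin.sqrt hx.ne' |>.div ((hasDerivAt_id' x).add_const 1) (by linarith)).congr_deriv ?_
  field_simp
  rw [hsq]
  ring

lemma hasDerivAt_penalizedRate (α : ℝ) {x : ℝ} (hx : 0 < x) :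
    HasDerivAt (penalizedRate α)
      (-1 / (x * (x + 1)) + α * x / (√(2 * x + 1) * (x + 1) ^ 2)) x := by
  have h := (hasDerivAt_log_one_add_one_div hx.ne' (by linarith)).sub
    ((hasDerivAt_sqrt_two_mul_add_one_div (by linarith)).const_mul α)
  simp only [← mul_div_assoc] at h
  exact h.congr_deriv (by ring)

lemma penalizedRate_deriv_nonpos {α x : ℝ} (hx : 0 < x) (hα : α ≤ criticalPenalty x) :
    -1 / (x * (x + 1)) + α * x / (√(2 * x + 1) * (x + 1) ^ 2) ≤ 0 := by
  have : α * x / (√(2 * x + 1) * (x + 1) ^ 2) ≤ 1 / (x * (x + 1)) :=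
    calc α * x / (√(2 * x + 1) * (x + 1) ^ 2)
        ≤ criticalPenalty x * x / (√(2 * x + 1) * (x + 1) ^ 2) := by gcongr
      _ = 1 / (x * (x + 1)) := by unfold criticalPenalty; field_simp
  rw [neg_div]
  linarith

lemma criticalPenalty_eq {x : ℝ} (hx : 0 < x) :
    criticalPenalty x = (1 + x⁻¹) * √((1 + x⁻¹) ^ 2 - 1) := by
  have h : (1 + x⁻¹) ^ 2 - 1 = (2 * x + 1) / x ^ 2 := by field_simp; ring
  rw [h, sqrt_div' _ (sq_nonneg x), sqrt_sq hx.le, criticalPenalty]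
  field_simp

lemma criticalPenalty_antitoneOn : AntitoneOn criticalPenalty (Ioi 0) := by
  intro x (hx : 0 < x) y (hy : 0 < y) hxy
  rw [criticalPenalty_eq hx, criticalPenalty_eq hy]
  have : y⁻¹ ≤ x⁻¹ := inv_anti₀ hx hxy
  gcongr

lemma mul_log_one_add_one_div_div_sqrt_le_criticalPenalty {x : ℝ} (hx : 0 < x) :
    (x + 1) * log (1 + 1 / x) / √(2 * x + 1) ≤ criticalPenalty x := by
  have hsq : √(2 * x + 1) ^ 2 = 2 * x + 1 := sq_sqrt (by linarith)
  have hlog : log (1 + 1 / x) ≤ 1 / x := by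
    linarith [log_le_sub_one_of_pos (by positivity : 0 < 1 + 1 / x)]
  calc (x + 1) * log (1 + 1 / x) / √(2 * x + 1)
      ≤ (x + 1) * (1 / x) / √(2 * x + 1) := by gcongr
    _ = (x + 1) * √(2 * x + 1) / (x * √(2 * x + 1) ^ 2) := by field_simp
    _ = (x + 1) * √(2 * x + 1) / (x * (2 * x + 1)) := by rw [hsq]
    _ ≤ criticalPenalty x := by unfold criticalPenalty; gcongr; nlinarith

lemma penalizedRate_antitoneOn {α y : ℝ} (hα : α ≤ criticalPenalty y) :
    AntitoneOn (penalizedRate α) (Ioc 0 y) := by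
  refine antitoneOn_of_hasDerivWithinAt_nonpos (convex_Ioc 0 y)
    (f' := fun x => -1 / (x * (x + 1)) + α * x / (√(2 * x + 1) * (x + 1) ^ 2))
    (fun x hx => (hasDerivAt_penalizedRate α hx.1).continuousAt.continuousWithinAt)
    (fun x hx => ?_) (fun x hx => ?_)
  all_goals rw [interior_Ioc] at hx
  · exact (hasDerivAt_penalizedRate α hx.1).hasDerivWithinAt
  · exact penalizedRate_deriv_nonpos hx.1 <|
      hα.trans (criticalPenalty_antitoneOn hx.1 (hx.1.trans hx.2) hx.2.le)

theorem f_antitoneOn_feasible_general (α : ℝ) :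
    ∀ x ∈ {x : ℝ | 0 < x ∧ α ≤ (x + 1) * Real.log (1 + 1 / x) / Real.sqrt (2 * x + 1)},
    ∀ y ∈ {x : ℝ | 0 < x ∧ α ≤ (x + 1) * Real.log (1 + 1 / x) / Real.sqrt (2 * x + 1)},
      x ≤ y →
      Real.log (1 + 1 / y) - α * Real.sqrt (2 * y + 1) / (y + 1) ≤
        Real.log (1 + 1 / x) - α * Real.sqrt (2 * x + 1) / (x + 1) := by
  rintro x ⟨hx, -⟩ y ⟨hy, hαy⟩ hxy
  have hα : α ≤ criticalPenalty y :=
    hαy.trans (mul_log_one_add_one_div_div_sqrt_le_criticalPenalty hy)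
  exact penalizedRate_antitoneOn hα ⟨hx, hxy⟩ ⟨hy, le_rfl⟩ hxy

/-- For `α ≥ 0`, `f_α(x) = ln(1+1/x) − α √(2x+1)/(x+1)` is decreasing on
`S_α = {x | x > 0 ∧ g x ≥ α}` where `g x = (x+1) ln(1+1/x)/√(2x+1)`. -/
theorem f_antitoneOn_feasible (α : ℝ) (hα : 0 ≤ α) :
    ∀ x ∈ {x : ℝ | 0 < x ∧ α ≤ (x + 1) * Real.log (1 + 1 / x) / Real.sqrt (2 * x + 1)},
    ∀ y ∈ {x : ℝ | 0 < x ∧ α ≤ (x + 1) * Real.log (1 + 1 / x) / Real.sqrt (2 * x + 1)},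
      x ≤ y →
      Real.log (1 + 1 / y) - α * Real.sqrt (2 * y + 1) / (y + 1) ≤
        Real.log (1 + 1 / x) - α * Real.sqrt (2 * x + 1) / (x + 1) :=
  f_antitoneOn_feasible_general α
end

section
/- Let α ≥ 0 and define f_α(x) = ln(1+1/x) − α·√(2x+1)/(x+1) for x > 0. Then the set S_α = {x : x > 0 and g(x) ≥ α}, where g(x) = (x+1)·ln(1+1/x)/√(2x+1), is a convex subset of ℝ, and f_α is convex on S_α: for all x, y ∈ S_α and all t ∈ [0,1], f_α(t·x + (1−t)·y) ≤ t·f_α(x) + (1−t)·f_α(y). -/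
/-!
Write `L x = log (1 + 1/x)` and `φ x = √(2x+1)/(x+1)`, so that `f_α = L - α φ` and `g = L / φ`.
Since `log (1 + 1/x) ≤ 1/x`, the factor `(x+1) L x` of `g` is decreasing, and `√(2x+1)` is
increasing, so `g` is decreasing and the feasible set is an interval. On it,
`f_α'' = L'' - α φ''`: where `φ'' ≤ 0` this is clearly nonnegative, and where `φ'' > 0` the
constraint `α ≤ g` gives `α φ'' ≤ g φ'' = L (3x²-1) / ((2x+1)² (x+1)²)`, which is at most
`L'' = (2x+1) / (x(x+1))²` because `x L x ≤ 1`.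
-/

open Real Set

namespace FiniteBlocklength

noncomputable def g (x : ℝ) : ℝ := (x + 1) * log (1 + 1 / x) / √(2 * x + 1)

noncomputable def f (α x : ℝ) : ℝ := log (1 + 1 / x) - α * √(2 * x + 1) / (x + 1)

theorem convexOn_of_hasDerivAt2_nonneg {D : Set ℝ} (hD : Convex ℝ D) {f f' f'' : ℝ → ℝ}
    (hf : ∀ x ∈ D, HasDerivAt f (f' x) x) (hf' : ∀ x ∈ D, HasDerivAt f' (f'' x) x)
    (hf'' : ∀ x ∈ D, 0 ≤ f'' x) : ConvexOn ℝ D f :=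
  convexOn_of_hasDerivWithinAt2_nonneg hD (fun x hx => (hf x hx).continuousAt.continuousWithinAt)
    (fun x hx => (hf x (interior_subset hx)).hasDerivWithinAt)
    (fun x hx => (hf' x (interior_subset hx)).hasDerivWithinAt)
    (fun x hx => hf'' x (interior_subset hx))

section Calculus

variable {x : ℝ}

lemma log_one_add_one_div_nonneg (hx : 0 ≤ x) : 0 ≤ log (1 + 1 / x) :=
  log_nonneg (le_add_of_nonneg_right (by positivity))

lemma log_one_add_one_div_le (hx : 0 < x) : log (1 + 1 / x) ≤ 1 / x := by
  linarith [log_le_sub_one_of_pos (show 0 < 1 + 1 / x by positivity)]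

lemma mul_log_one_add_one_div_le_one (hx : 0 < x) : x * log (1 + 1 / x) ≤ 1 := by
  calc x * log (1 + 1 / x) ≤ x * (1 / x) := by gcongr; exact log_one_add_one_div_le hx
    _ = 1 := by field_simp

lemma hasDerivAt_log_one_add_one_div (hx : 0 < x) :
    HasDerivAt (fun x => log (1 + 1 / x)) (-1 / (x * (x + 1))) x := by
  have h := ((hasDerivAt_inv hx.ne').const_add 1).log (by positivity)
  simp only [one_div] at h ⊢
  refine h.congr_deriv ?_
  field_simp

lemma hasDerivAt_neg_one_div_mul_add_one (hx : 0 < x) :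
    HasDerivAt (fun x => -1 / (x * (x + 1))) ((2 * x + 1) / (x * (x + 1)) ^ 2) x := by
  have h := (hasDerivAt_const x (-1 : ℝ)).fun_div ((hasDerivAt_id' x).fun_mul
    ((hasDerivAt_id' x).add_const 1)) (by positivity)
  refine h.congr_deriv ?_
  ring

lemma hasDerivAt_sqrt_two_mul_add_one (hx : 0 < 2 * x + 1) :
    HasDerivAt (fun x => √(2 * x + 1)) (1 / √(2 * x + 1)) x := by
  have h := (((hasDerivAt_id' x).const_mul 2).add_const 1).sqrt hx.ne'
  refine h.congr_deriv ?_
  field_simp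

lemma hasDerivAt_sqrt_div (hx : 0 < x) :
    HasDerivAt (fun x => √(2 * x + 1) / (x + 1))
      (-x / (√(2 * x + 1) * (x + 1) ^ 2)) x := by
  have hs : 0 < √(2 * x + 1) := sqrt_pos.2 (by linarith)
  have h := (hasDerivAt_sqrt_two_mul_add_one (by linarith)).fun_div
    ((hasDerivAt_id' x).add_const 1) (by positivity)
  refine h.congr_deriv ?_
  field_simp
  rw [sq_sqrt (by linarith)]
  ring

lemma hasDerivAt_deriv_sqrt_div (hx : 0 < x) :
    HasDerivAt (fun x => -x / (√(2 * x + 1) * (x + 1) ^ 2))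
      ((3 * x ^ 2 - 1) / (√(2 * x + 1) * (2 * x + 1) * (x + 1) ^ 3)) x := by
  have hs : 0 < √(2 * x + 1) := sqrt_pos.2 (by linarith)
  have h := (hasDerivAt_id' x).fun_neg.fun_div
    ((hasDerivAt_sqrt_two_mul_add_one (by linarith)).fun_mul
      (((hasDerivAt_id' x).add_const 1).fun_pow 2)) (by positivity)
  refine h.congr_deriv ?_
  field_simp
  rw [sq_sqrt (by linarith)]
  ring

end Calculus

lemma antitoneOn_add_one_mul_log_one_add_one_div :
    AntitoneOn (fun x => (x + 1) * log (1 + 1 / x)) (Ioi 0) := by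
  refine antitoneOn_of_hasDerivWithinAt_nonpos (convex_Ioi 0)
    (f' := fun x => log (1 + 1 / x) - 1 / x) ?_ ?_ ?_
  · exact fun x hx => (((hasDerivAt_id' x).add_const 1).fun_mul
      (hasDerivAt_log_one_add_one_div hx)).continuousAt.continuousWithinAt
  · intro x hx
    rw [interior_Ioi, mem_Ioi] at hx
    refine (((hasDerivAt_id' x).add_const 1).fun_mul
      (hasDerivAt_log_one_add_one_div hx)).hasDerivWithinAt.congr_deriv ?_
    field_simp
    ring
  · intro x hx
    rw [interior_Ioi] at hx
    linarith [log_one_add_one_div_le hx]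

lemma antitoneOn_g : AntitoneOn g (Ioi 0) := by
  rintro x (hx : 0 < x) y (hy : 0 < y) hxy
  exact div_le_div₀ (mul_nonneg (by linarith) (log_one_add_one_div_nonneg hx.le))
    (antitoneOn_add_one_mul_log_one_add_one_div hx hy hxy)
    (sqrt_pos.2 (by linarith)) (sqrt_le_sqrt (by linarith))

lemma g_mul_deriv2_sqrt_div_le {x : ℝ} (hx : 0 < x) :
    g x * ((3 * x ^ 2 - 1) / (√(2 * x + 1) * (2 * x + 1) * (x + 1) ^ 3)) ≤
      (2 * x + 1) / (x * (x + 1)) ^ 2 := by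
  have hs : 0 < √(2 * x + 1) := sqrt_pos.2 (by linarith)
  have hxL := mul_log_one_add_one_div_le_one hx
  have hL := log_one_add_one_div_nonneg hx.le
  have key : log (1 + 1 / x) * (3 * x ^ 2 - 1) * x ^ 2 ≤ (2 * x + 1) ^ 3 := by
    rcases le_total 0 (3 * x ^ 2 - 1) with h | h
    · nlinarith [mul_le_mul_of_nonneg_right hxL (mul_nonneg hx.le h)]
    · nlinarith [mul_nonpos_of_nonneg_of_nonpos (mul_nonneg hL (sq_nonneg x)) h]
  calc g x * ((3 * x ^ 2 - 1) / (√(2 * x + 1) * (2 * x + 1) * (x + 1) ^ 3))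
      = log (1 + 1 / x) * (3 * x ^ 2 - 1) / ((2 * x + 1) ^ 2 * (x + 1) ^ 2) := by
        unfold g
        field_simp
        rw [sq_sqrt (by linarith)]
    _ ≤ (2 * x + 1) / (x * (x + 1)) ^ 2 := by
        rw [div_le_div_iff₀ (by positivity) (by positivity)]
        nlinarith [mul_le_mul_of_nonneg_right key (by positivity : (0 : ℝ) ≤ (x + 1) ^ 4)]

lemma convex_setOf_le_g (α : ℝ) : Convex ℝ {x : ℝ | 0 < x ∧ α ≤ g x} :=
  antitoneOn_g.convex_ge (convex_Ioi 0) α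

lemma convexOn_f {α : ℝ} (hα : 0 ≤ α) : ConvexOn ℝ {x : ℝ | 0 < x ∧ α ≤ g x} (f α) := by
  refine convexOn_of_hasDerivAt2_nonneg (convex_setOf_le_g α)
    (f' := fun x => -1 / (x * (x + 1)) - α * (-x / (√(2 * x + 1) * (x + 1) ^ 2)))
    (f'' := fun x => (2 * x + 1) / (x * (x + 1)) ^ 2 -
      α * ((3 * x ^ 2 - 1) / (√(2 * x + 1) * (2 * x + 1) * (x + 1) ^ 3)))
    (fun x hx => ?_) (fun x hx => ?_) (fun x ⟨hx, hαg⟩ => ?_)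
  · have hf : f α = fun y => log (1 + 1 / y) - α * (√(2 * y + 1) / (y + 1)) := by
      ext y
      rw [f, mul_div_assoc]
    rw [hf]
    exact (hasDerivAt_log_one_add_one_div hx.1).sub ((hasDerivAt_sqrt_div hx.1).const_mul α)
  · exact (hasDerivAt_neg_one_div_mul_add_one hx.1).sub
      ((hasDerivAt_deriv_sqrt_div hx.1).const_mul α)
  · rw [sub_nonneg]
    rcases le_total 0 ((3 * x ^ 2 - 1) / (√(2 * x + 1) * (2 * x + 1) * (x + 1) ^ 3)) with h | h
    · exact (mul_le_mul_of_nonneg_right hαg h).trans (g_mul_deriv2_sqrt_div_le hx)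
    · exact (mul_nonpos_of_nonneg_of_nonpos hα h).trans (by positivity)

end FiniteBlocklength

/-- For `α ≥ 0`, the set `S_α = {x | x > 0 ∧ g x ≥ α}` is convex and
`f_α(x) = ln(1+1/x) − α √(2x+1)/(x+1)` is convex on `S_α`. -/
theorem f_convexOn_feasible (α : ℝ) (hα : 0 ≤ α) :
    Convex ℝ {x : ℝ | 0 < x ∧ α ≤ (x + 1) * Real.log (1 + 1 / x) / Real.sqrt (2 * x + 1)} ∧
    ∀ x ∈ {x : ℝ | 0 < x ∧ α ≤ (x + 1) * Real.log (1 + 1 / x) / Real.sqrt (2 * x + 1)},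
    ∀ y ∈ {x : ℝ | 0 < x ∧ α ≤ (x + 1) * Real.log (1 + 1 / x) / Real.sqrt (2 * x + 1)},
    ∀ t : ℝ, 0 ≤ t → t ≤ 1 →
      Real.log (1 + 1 / (t * x + (1 - t) * y)) -
          α * Real.sqrt (2 * (t * x + (1 - t) * y) + 1) / ((t * x + (1 - t) * y) + 1) ≤
        t * (Real.log (1 + 1 / x) - α * Real.sqrt (2 * x + 1) / (x + 1)) +
          (1 - t) * (Real.log (1 + 1 / y) - α * Real.sqrt (2 * y + 1) / (y + 1)) := by
  refine ⟨FiniteBlocklength.convex_setOf_le_g α, fun x hx y hy t ht₀ ht₁ => ?_⟩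
  simpa only [FiniteBlocklength.f, smul_eq_mul] using
    (FiniteBlocklength.convexOn_f hα).2 hx hy ht₀ (sub_nonneg.2 ht₁) (add_sub_cancel t 1)
end

section
/- Define G(x) = √(x² + 2x)/(1+x) for x > 0 and let c₀ = (√17 − 3)/4. For any fixed x̂ ≥ c₀, set ρ̃ = x̂/√(x̂² + 2x̂) − x̂·√(x̂² + 2x̂)/(1+x̂)² and δ̃ = √(1 − 1/(1+x̂)²) − ρ̃·ln(x̂). Then for every x ≥ c₀ one has G(x) ≤ ρ̃·ln(x) + δ̃, with equality when x = x̂. -/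
/-!
In the variable `t = ln x`, `G ∘ exp` has derivative `φ(x) = x G'(x) = x / (√(x² + 2x) (1 + x)²)`
(`logSlopeG`), and `φ(x)² = x / ((x + 2)(1 + x)⁴)` is decreasing exactly where
`2x² + 3x − 1 ≥ 0`, i.e. for `x ≥ c₀`. Hence `G ∘ exp` is concave on `[ln c₀, ∞)`, and
`ρ̃ ln x + δ̃` is its tangent line at `ln x̂`: indeed `ρ̃ = φ(x̂)` and `√(1 − 1/(1 + x̂)²) = G(x̂)`.
-/

open Real Set

theorem ConcaveOn.le_add_mul_sub_of_hasDerivAt {S : Set ℝ} {f : ℝ → ℝ} {a b f' : ℝ}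
    (hf : ConcaveOn ℝ S f) (ha : a ∈ S) (hb : b ∈ S) (hf' : HasDerivAt f f' a) :
    f b ≤ f a + f' * (b - a) := by
  rcases lt_trichotomy a b with hab | rfl | hba
  · have h := hf.slope_le_of_hasDerivAt ha hb hab hf'
    rw [slope_def_field, div_le_iff₀ (sub_pos.2 hab)] at h
    linarith
  · simp
  · have h := hf.le_slope_of_hasDerivAt hb ha hba hf'
    rw [slope_def_field, le_div_iff₀ (sub_pos.2 hba)] at h
    linarith

noncomputable def c₀ : ℝ := (√17 - 3) / 4

lemma two_mul_c₀_sq_add_three_mul_c₀_sub_one : 2 * c₀ ^ 2 + 3 * c₀ - 1 = 0 := by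
  have h17 : √17 ^ 2 = 17 := sq_sqrt (by norm_num)
  unfold c₀
  linear_combination h17 / 8

lemma c₀_pos : 0 < c₀ := by
  have : (3 : ℝ) < √17 := by
    rw [lt_sqrt (by norm_num)]
    norm_num
  unfold c₀
  linarith

lemma two_mul_sq_add_three_mul_sub_one_nonneg {x : ℝ} (hx : c₀ ≤ x) :
    0 ≤ 2 * x ^ 2 + 3 * x - 1 := by
  nlinarith [two_mul_c₀_sq_add_three_mul_c₀_sub_one, c₀_pos]

noncomputable def G (x : ℝ) : ℝ := √(x ^ 2 + 2 * x) / (1 + x)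

noncomputable def logSlopeG (x : ℝ) : ℝ := x / (√(x ^ 2 + 2 * x) * (1 + x) ^ 2)

lemma hasDerivAt_G {x : ℝ} (hx : 0 < x) :
    HasDerivAt G (1 / (√(x ^ 2 + 2 * x) * (1 + x) ^ 2)) x := by
  have hq : 0 < x ^ 2 + 2 * x := by positivity
  have hsqrt : HasDerivAt (fun y => √(y ^ 2 + 2 * y)) ((2 * x + 2) / (2 * √(x ^ 2 + 2 * x))) x :=
    (((hasDerivAt_pow 2 x).add ((hasDerivAt_id' x).const_mul 2)).sqrt hq.ne').congr_deriv
      (by simp)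
  refine (hsqrt.div ((hasDerivAt_id' x).const_add 1) (by positivity)).congr_deriv ?_
  have hs : 0 < √(x ^ 2 + 2 * x) := sqrt_pos.2 hq
  have hs2 := sq_sqrt hq.le
  generalize √(x ^ 2 + 2 * x) = s at *
  field_simp
  linear_combination -hs2

lemma hasDerivAt_G_comp_exp (t : ℝ) : HasDerivAt (G ∘ exp) (logSlopeG (exp t)) t := by
  refine ((hasDerivAt_G (exp_pos t)).comp t (hasDerivAt_exp t)).congr_deriv ?_
  unfold logSlopeG
  ring

lemma logSlopeG_nonneg {x : ℝ} (hx : 0 ≤ x) : 0 ≤ logSlopeG x := by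
  unfold logSlopeG
  positivity

lemma logSlopeG_sq {x : ℝ} (hx : 0 ≤ x) : logSlopeG x ^ 2 = x / ((x + 2) * (1 + x) ^ 4) := by
  rcases hx.eq_or_lt with rfl | hx
  · simp [logSlopeG]
  have hq : 0 < x ^ 2 + 2 * x := by positivity
  rw [logSlopeG, div_pow, mul_pow, sq_sqrt hq.le]
  field_simp

lemma antitoneOn_div_add_two_mul_one_add_pow_four :
    AntitoneOn (fun x : ℝ => x / ((x + 2) * (1 + x) ^ 4)) (Ici c₀) := by
  intro a ha b hb hab
  simp only [mem_Ici] at ha hb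
  have ha0 : 0 < a := c₀_pos.trans_le ha
  have hb0 : 0 < b := ha0.trans_le hab
  rw [div_le_div_iff₀ (by positivity) (by positivity)]
  have hfirst : 0 ≤ (b - a) * (2 * (2 * a ^ 2 + 3 * a - 1) * (1 + a) ^ 3) :=
    mul_nonneg (sub_nonneg.2 hab)
      (mul_nonneg (mul_nonneg zero_le_two (two_mul_sq_add_three_mul_sub_one_nonneg ha))
        (by positivity))
  have hsecond : 0 ≤ (b - a) ^ 2 * (a * (16 + 14 * b + 6 * b ^ 2 + b ^ 3) +
      a ^ 2 * (28 + 12 * b + 2 * b ^ 2) + a ^ 3 * (18 + 3 * b) + 4 * a ^ 4) := by positivity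
  linear_combination hfirst + hsecond

lemma antitoneOn_logSlopeG : AntitoneOn logSlopeG (Ici c₀) := by
  intro a ha b hb hab
  have ha0 : 0 ≤ a := c₀_pos.le.trans ha
  have hb0 : 0 ≤ b := ha0.trans hab
  rw [← pow_le_pow_iff_left₀ (logSlopeG_nonneg hb0) (logSlopeG_nonneg ha0) two_ne_zero,
    logSlopeG_sq ha0, logSlopeG_sq hb0]
  exact antitoneOn_div_add_two_mul_one_add_pow_four ha hb hab

lemma concaveOn_G_comp_exp : ConcaveOn ℝ (Ici (log c₀)) (G ∘ exp) := by
  have hderiv : deriv (G ∘ exp) = logSlopeG ∘ exp :=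
    funext fun t => (hasDerivAt_G_comp_exp t).deriv
  refine AntitoneOn.concaveOn_of_deriv (convex_Ici _)
    (fun t _ => (hasDerivAt_G_comp_exp t).continuousAt.continuousWithinAt)
    (fun t _ => (hasDerivAt_G_comp_exp t).differentiableAt.differentiableWithinAt) ?_
  rw [hderiv, interior_Ici]
  intro s hs t ht hst
  exact antitoneOn_logSlopeG ((log_lt_iff_lt_exp c₀_pos).1 hs).le
    ((log_lt_iff_lt_exp c₀_pos).1 ht).le (exp_le_exp.2 hst)

/-- Tangent-line upper bound for `G(x) = √(x²+2x)/(1+x)` in `ln x`, valid for `x ≥ (√17−3)/4`. -/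
theorem G_tangent_upper_bound (xh : ℝ) (hxh : (Real.sqrt 17 - 3) / 4 ≤ xh) :
    let ρ := xh / Real.sqrt (xh ^ 2 + 2 * xh) -
      xh * Real.sqrt (xh ^ 2 + 2 * xh) / (1 + xh) ^ 2
    let δ := Real.sqrt (1 - 1 / (1 + xh) ^ 2) - ρ * Real.log xh
    (∀ x : ℝ, (Real.sqrt 17 - 3) / 4 ≤ x →
        Real.sqrt (x ^ 2 + 2 * x) / (1 + x) ≤ ρ * Real.log x + δ) ∧
      Real.sqrt (xh ^ 2 + 2 * xh) / (1 + xh) = ρ * Real.log xh + δ := by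
  intro ρ δ
  have hxh0 : 0 < xh := c₀_pos.trans_le hxh
  have hq : 0 < xh ^ 2 + 2 * xh := by positivity
  have hρ : ρ = logSlopeG xh := by
    have hs : 0 < √(xh ^ 2 + 2 * xh) := sqrt_pos.2 hq
    have hs2 := sq_sqrt hq.le
    simp only [ρ, logSlopeG]
    generalize √(xh ^ 2 + 2 * xh) = s at *
    field_simp
    linear_combination -hs2
  have hδ : δ = G xh - ρ * log xh := by
    have h : 1 - 1 / (1 + xh) ^ 2 = (xh ^ 2 + 2 * xh) / (1 + xh) ^ 2 := by
      field_simp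
      ring
    simp only [δ, G, h, sqrt_div' _ (sq_nonneg (1 + xh)), sqrt_sq (by positivity : 0 ≤ 1 + xh)]
  refine ⟨fun x hx => ?_, show G xh = _ by rw [hδ]; ring⟩
  have hx0 : 0 < x := c₀_pos.trans_le hx
  have hmem : ∀ {y}, c₀ ≤ y → log y ∈ Ici (log c₀) := fun hy => log_le_log c₀_pos hy
  have htangent := concaveOn_G_comp_exp.le_add_mul_sub_of_hasDerivAt (hmem hxh) (hmem hx)
    (hasDerivAt_G_comp_exp (log xh))
  simp only [Function.comp_apply, exp_log hx0, exp_log hxh0, ← hρ] at htangent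
  show G x ≤ _
  rw [hδ]
  linarith
end

section
/- Let M be a nonempty finite index set, K > 0 a real constant, and for each m ∈ M let β_m > 0. For p > 0 define θ(p) = K·p·Σ_{m∈M} β_m²·Π_{n∈M, n≠m}(K·p·β_n + 1). Fix p̂ > 0 and set a = 1 + (Σ_{m∈M} β_m²·Σ_{n∈M, n≠m} K·β_n·p̂·Π_{i∈M, i≠m, i≠n}(K·β_i·p̂ + 1)) / (Σ_{m∈M} β_m²·Π_{n∈M, n≠m}(K·β_n·p̂ + 1)) and c = ln(θ(p̂)) − a·ln(p̂). Then for every p > 0 one has θ(p) ≥ e^c · p^a, with equality when p = p̂. -/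
/-!
`θ` is a posynomial in `p`, i.e. built from monomials by sums and products with nonnegative
values, and monomial minorants touching at `p̂` propagate through both operations: for products
the exponents add, for sums weighted AM-GM gives the average of the exponents weighted by the
terms' values at `p̂`. Each factor `K β p + 1` gets one from Bernoulli's inequality. The resulting
exponent is `a`, by the identity `(∏ f) · ∑ u / f = ∑ u ∏_{erase} f`.
-/

open Finset Real

/-- The monomial `x ↦ f x₀ (x / x₀) ^ a`, which agrees with `f` at `x₀`, lies below `f` on
`(0, ∞)`. -/
def HasMonomialMinorant (f : ℝ → ℝ) (x₀ a : ℝ) : Prop :=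
  ∀ x, 0 < x → f x₀ * (x / x₀) ^ a ≤ f x

namespace HasMonomialMinorant

variable {f g : ℝ → ℝ} {x₀ a b : ℝ}

theorem const (c x₀ : ℝ) : HasMonomialMinorant (fun _ => c) x₀ 0 := fun x _ => by simp

theorem const_mul_id (c : ℝ) (hx₀ : 0 < x₀) : HasMonomialMinorant (fun x => c * x) x₀ 1 :=
  fun x _ => by rw [rpow_one, mul_assoc, mul_div_cancel₀ x hx₀.ne']

theorem affine (hb : 0 ≤ b) (hx₀ : 0 < x₀) :
    HasMonomialMinorant (fun x => b * x + 1) x₀ (b * x₀ / (b * x₀ + 1)) := by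
  intro x hx
  have hu : 0 < b * x₀ + 1 := by positivity
  have hw : b * x₀ / (b * x₀ + 1) ≤ 1 := by rw [div_le_one hu]; linarith
  have bernoulli := rpow_one_add_le_one_add_mul_self (s := x / x₀ - 1)
    (by linarith [div_pos hx hx₀]) (by positivity) hw
  rw [add_sub_cancel] at bernoulli
  calc (b * x₀ + 1) * (x / x₀) ^ (b * x₀ / (b * x₀ + 1))
      ≤ (b * x₀ + 1) * (1 + b * x₀ / (b * x₀ + 1) * (x / x₀ - 1)) := by gcongr
    _ = b * x + 1 := by field_simp; ring

theorem mul (hf : HasMonomialMinorant f x₀ a) (hg : HasMonomialMinorant g x₀ b)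
    (hx₀ : 0 < x₀) (hf₀ : 0 ≤ f x₀) (hg₀ : 0 ≤ g x₀) :
    HasMonomialMinorant (fun x => f x * g x) x₀ (a + b) := by
  intro x hx
  have ht : 0 < x / x₀ := div_pos hx hx₀
  calc f x₀ * g x₀ * (x / x₀) ^ (a + b) = (f x₀ * (x / x₀) ^ a) * (g x₀ * (x / x₀) ^ b) := by
        rw [rpow_add ht]; ring
    _ ≤ f x * g x :=
        mul_le_mul (hf x hx) (hg x hx) (by positivity)
          ((mul_nonneg hf₀ (rpow_nonneg ht.le a)).trans (hf x hx))

theorem const_mul (c : ℝ) (hf : HasMonomialMinorant f x₀ a) (hx₀ : 0 < x₀) (hc : 0 ≤ c)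
    (hf₀ : 0 ≤ f x₀) : HasMonomialMinorant (fun x => c * f x) x₀ a := by
  simpa using (const c x₀).mul hf hx₀ hc hf₀

theorem prod {ι : Type*} {s : Finset ι} {f : ι → ℝ → ℝ} {a : ι → ℝ}
    (hf : ∀ i ∈ s, HasMonomialMinorant (f i) x₀ (a i)) (hx₀ : 0 < x₀)
    (hf₀ : ∀ i ∈ s, 0 ≤ f i x₀) :
    HasMonomialMinorant (fun x => ∏ i ∈ s, f i x) x₀ (∑ i ∈ s, a i) := by
  classical
  induction s using Finset.induction_on with
  | empty => simpa using const 1 x₀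
  | insert j s hj ih =>
    simp only [prod_insert hj, sum_insert hj]
    exact (hf j (mem_insert_self j s)).mul (ih (fun i hi => hf i (mem_insert_of_mem hi))
      (fun i hi => hf₀ i (mem_insert_of_mem hi))) hx₀ (hf₀ j (mem_insert_self j s))
      (prod_nonneg fun i hi => hf₀ i (mem_insert_of_mem hi))

theorem sum {ι : Type*} {s : Finset ι} {f : ι → ℝ → ℝ} {a : ι → ℝ}
    (hf : ∀ i ∈ s, HasMonomialMinorant (f i) x₀ (a i)) (hx₀ : 0 < x₀)
    (hf₀ : ∀ i ∈ s, 0 ≤ f i x₀) :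
    HasMonomialMinorant (fun x => ∑ i ∈ s, f i x) x₀
      ((∑ i ∈ s, f i x₀ * a i) / ∑ i ∈ s, f i x₀) := by
  intro x hx
  dsimp only
  have ht : 0 < x / x₀ := div_pos hx hx₀
  have termwise : ∑ i ∈ s, f i x₀ * (x / x₀) ^ a i ≤ ∑ i ∈ s, f i x :=
    sum_le_sum fun i hi => hf i hi x hx
  set F := ∑ i ∈ s, f i x₀
  have hF₀ : 0 ≤ F := sum_nonneg hf₀
  rcases hF₀.eq_or_lt with hF | hF
  · rw [← hF, zero_mul]
    exact (sum_nonneg fun i hi => mul_nonneg (hf₀ i hi) (rpow_nonneg ht.le _)).trans termwise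
  have amgm := geom_mean_le_arith_mean_weighted s (fun i => f i x₀ / F) (fun i => (x / x₀) ^ a i)
    (fun i hi => div_nonneg (hf₀ i hi) hF.le) (by rw [← sum_div, div_self hF.ne'])
    (fun i _ => rpow_nonneg ht.le _)
  have geom : ∏ i ∈ s, ((x / x₀) ^ a i) ^ (f i x₀ / F) =
      (x / x₀) ^ ((∑ i ∈ s, f i x₀ * a i) / F) := by
    simp_rw [← rpow_mul ht.le, sum_div, rpow_sum_of_pos ht]
    exact prod_congr rfl fun i _ => by ring_nf
  rw [geom] at amgm
  calc F * (x / x₀) ^ ((∑ i ∈ s, f i x₀ * a i) / F)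
      ≤ F * ∑ i ∈ s, f i x₀ / F * (x / x₀) ^ a i := by gcongr
    _ = ∑ i ∈ s, f i x₀ * (x / x₀) ^ a i := by
        rw [mul_sum]; exact sum_congr rfl fun i _ => by field_simp
    _ ≤ _ := termwise

end HasMonomialMinorant

theorem exp_log_sub_mul_log_mul_rpow {x₀ y a x : ℝ} (hx₀ : 0 < x₀) (hy : 0 < y) (hx : 0 ≤ x) :
    exp (log y - a * log x₀) * x ^ a = y * (x / x₀) ^ a := by
  rw [exp_sub, exp_log hy, mul_comm a, ← rpow_def_of_pos hx₀, div_rpow hx hx₀.le]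
  ring

theorem Finset.prod_mul_sum_div {ι R : Type*} [Field R] [DecidableEq ι] {s : Finset ι}
    {f : ι → R} (u : ι → R) (hf : ∀ i ∈ s, f i ≠ 0) :
    (∏ i ∈ s, f i) * ∑ i ∈ s, u i / f i = ∑ i ∈ s, u i * ∏ j ∈ s.erase i, f j := by
  rw [mul_sum]
  refine sum_congr rfl fun i hi => ?_
  rw [← mul_prod_erase s f hi]
  field_simp [hf i hi]

/-- Best local monomial lower bound of `θ(p)` at `p̂`: `θ(p) ≥ e^c pᵃ`, with equality at `p = p̂`. -/
theorem theta_monomial_lower_bound {ι : Type*} [DecidableEq ι] (M : Finset ι) (hM : M.Nonempty)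
    (K : ℝ) (hK : 0 < K) (β : ι → ℝ) (hβ : ∀ m ∈ M, 0 < β m)
    (ph : ℝ) (hph : 0 < ph) :
    let θ := fun p : ℝ => K * p * ∑ m ∈ M, (β m) ^ 2 * ∏ n ∈ M.erase m, (K * p * β n + 1)
    let a := 1 +
      (∑ m ∈ M, (β m) ^ 2 *
          ∑ n ∈ M.erase m, (K * β n * ph * ∏ i ∈ (M.erase m).erase n, (K * β i * ph + 1))) /
        (∑ m ∈ M, (β m) ^ 2 * ∏ n ∈ M.erase m, (K * β n * ph + 1))
    let c := Real.log (θ ph) - a * Real.log ph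
    (∀ p : ℝ, 0 < p → Real.exp c * p ^ a ≤ θ p) ∧ Real.exp c * ph ^ a = θ ph := by
  intro θ a c
  have hθ_eq : θ = fun p => K * p * ∑ m ∈ M, β m ^ 2 * ∏ n ∈ M.erase m, (K * β n * p + 1) := by
    funext p
    simp only [θ, mul_right_comm K p]
  have hfactor_pos : ∀ m ∈ M, ∀ n ∈ M.erase m, 0 < K * β n * ph + 1 := fun m _ n hn => by
    have := hβ n (mem_of_mem_erase hn); positivity
  have hterm_pos : ∀ m ∈ M, 0 < β m ^ 2 * ∏ n ∈ M.erase m, (K * β n * ph + 1) := fun m hm =>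
    mul_pos (pow_pos (hβ m hm) 2) (prod_pos (hfactor_pos m hm))
  have hsum_pos := sum_pos hterm_pos hM
  have hterm : ∀ m ∈ M,
      HasMonomialMinorant (fun p => β m ^ 2 * ∏ n ∈ M.erase m, (K * β n * p + 1)) ph
        (∑ n ∈ M.erase m, K * β n * ph / (K * β n * ph + 1)) := fun m hm =>
    ((HasMonomialMinorant.prod
      (fun n hn => .affine (by have := hβ n (mem_of_mem_erase hn); positivity) hph) hph
      fun n hn => (hfactor_pos m hm n hn).le)).const_mul _ hph (sq_nonneg _)
      (prod_nonneg fun n hn => (hfactor_pos m hm n hn).le)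
  have hθ : HasMonomialMinorant θ ph a := by
    have hexp : a = 1 + (∑ m ∈ M, (β m ^ 2 * ∏ n ∈ M.erase m, (K * β n * ph + 1)) *
        ∑ n ∈ M.erase m, K * β n * ph / (K * β n * ph + 1)) /
          ∑ m ∈ M, β m ^ 2 * ∏ n ∈ M.erase m, (K * β n * ph + 1) := by
      refine congrArg (1 + · / _) (sum_congr rfl fun m hm => ?_)
      rw [mul_assoc, prod_mul_sum_div _ fun n hn => (hfactor_pos m hm n hn).ne']
    rw [hθ_eq, hexp]
    exact (HasMonomialMinorant.const_mul_id K hph).mul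
      (.sum hterm hph fun m hm => (hterm_pos m hm).le) hph (by positivity) hsum_pos.le
  have hθ_pos : 0 < θ ph := by rw [hθ_eq]; exact mul_pos (by positivity) hsum_pos
  refine ⟨fun p hp => ?_, ?_⟩
  · rw [exp_log_sub_mul_log_mul_rpow hph hθ_pos hp.le]
    exact hθ p hp
  · rw [exp_log_sub_mul_log_mul_rpow hph hθ_pos hph.le, div_self hph.ne', one_rpow, mul_one]
end

section
/- Let M be a nonempty finite index set, K > 0 a real constant, and for each m ∈ M let β_m > 0. Then the function F(x) = ln(K·e^x·Σ_{m∈M} β_m²·Π_{n∈M, n≠m}(K·β_n·e^x + 1)), i.e. the logarithm of θ(p) = K·p·Σ_{m∈M} β_m²·Π_{n∈M, n≠m}(K·p·β_n + 1) evaluated at p = e^x, is convex on ℝ. -/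
/-!
Substituting `p = eˣ`, each factor `K βₙ eˣ + 1` is a sum of log-convex functions of `x`, and
`θ(eˣ)` is built from such factors, the log-convex function `eˣ` and positive constants by products
and sums. Log-convexity of positive functions is preserved by products (the logarithms add) and by
sums, the latter by the two-term Hölder inequality, itself a consequence of weighted AM-GM.
-/

open Finset Real

theorem Real.rpow_mul_rpow_add_rpow_mul_rpow_le {u₁ u₂ v₁ v₂ a b : ℝ} (hu₁ : 0 < u₁) (hu₂ : 0 < u₂)
    (hv₁ : 0 < v₁) (hv₂ : 0 < v₂) (ha : 0 ≤ a) (hb : 0 ≤ b) (hab : a + b = 1) :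
    u₁ ^ a * v₁ ^ b + u₂ ^ a * v₂ ^ b ≤ (u₁ + u₂) ^ a * (v₁ + v₂) ^ b := by
  set U := u₁ + u₂
  set V := v₁ + v₂
  have hU : 0 < U := by positivity
  have hV : 0 < V := by positivity
  -- weighted AM-GM applied to the normalised pairs `(u / U, v / V)`
  have amgm : ∀ u v, 0 < u → 0 < v → u ^ a * v ^ b ≤ U ^ a * V ^ b * (a * (u / U) + b * (v / V)) := by
    intro u v hu hv
    calc u ^ a * v ^ b = U ^ a * V ^ b * ((u / U) ^ a * (v / V) ^ b) := by
          rw [div_rpow hu.le hU.le, div_rpow hv.le hV.le]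
          field_simp
      _ ≤ U ^ a * V ^ b * (a * (u / U) + b * (v / V)) := by
          gcongr
          exact geom_mean_le_arith_mean2_weighted ha hb (by positivity) (by positivity) hab
  have weights : a * (u₁ / U) + b * (v₁ / V) + (a * (u₂ / U) + b * (v₂ / V)) = 1 := by
    field_simp
    linear_combination U * V * hab
  calc u₁ ^ a * v₁ ^ b + u₂ ^ a * v₂ ^ b
      ≤ U ^ a * V ^ b * (a * (u₁ / U) + b * (v₁ / V)) +
          U ^ a * V ^ b * (a * (u₂ / U) + b * (v₂ / V)) :=
        add_le_add (amgm u₁ v₁ hu₁ hv₁) (amgm u₂ v₂ hu₂ hv₂)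
    _ = U ^ a * V ^ b := by rw [← mul_add, weights, mul_one]

structure LogConvexOn {E : Type*} [AddCommGroup E] [Module ℝ E] (s : Set E) (f : E → ℝ) :
    Prop where
  pos : ∀ x ∈ s, 0 < f x
  convexOn_log : ConvexOn ℝ s (fun x => log (f x))

namespace LogConvexOn

variable {E : Type*} [AddCommGroup E] [Module ℝ E] {s : Set E} {f g : E → ℝ}

theorem le_rpow_mul_rpow (hf : LogConvexOn s f) {x y : E} (hx : x ∈ s) (hy : y ∈ s) {a b : ℝ}
    (ha : 0 ≤ a) (hb : 0 ≤ b) (hab : a + b = 1) :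
    f (a • x + b • y) ≤ f x ^ a * f y ^ b := by
  calc f (a • x + b • y) = exp (log (f (a • x + b • y))) :=
        (exp_log (hf.pos _ (hf.convexOn_log.1 hx hy ha hb hab))).symm
    _ ≤ exp (a * log (f x) + b * log (f y)) :=
        exp_le_exp.2 (hf.convexOn_log.2 hx hy ha hb hab)
    _ = f x ^ a * f y ^ b := by
        rw [rpow_def_of_pos (hf.pos x hx), rpow_def_of_pos (hf.pos y hy), ← exp_add]
        ring_nf

theorem of_le_rpow_mul_rpow (hs : Convex ℝ s) (hpos : ∀ x ∈ s, 0 < f x)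
    (h : ∀ ⦃x⦄, x ∈ s → ∀ ⦃y⦄, y ∈ s → ∀ ⦃a b : ℝ⦄, 0 ≤ a → 0 ≤ b → a + b = 1 →
      f (a • x + b • y) ≤ f x ^ a * f y ^ b) :
    LogConvexOn s f := by
  refine ⟨hpos, hs, fun x hx y hy a b ha hb hab => ?_⟩
  have hfx := hpos x hx
  have hfy := hpos y hy
  calc log (f (a • x + b • y)) ≤ log (f x ^ a * f y ^ b) :=
        log_le_log (hpos _ (hs hx hy ha hb hab)) (h hx hy ha hb hab)
    _ = a * log (f x) + b * log (f y) := by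
        rw [log_mul (by positivity) (by positivity), log_rpow hfx, log_rpow hfy]

theorem const (hs : Convex ℝ s) {c : ℝ} (hc : 0 < c) : LogConvexOn s (fun _ => c) :=
  ⟨fun _ _ => hc, convexOn_const _ hs⟩

theorem _root_.ConvexOn.logConvexOn_exp (hg : ConvexOn ℝ s g) :
    LogConvexOn s (fun x => exp (g x)) :=
  ⟨fun _ _ => exp_pos _, by simpa only [log_exp] using hg⟩

theorem mul (hf : LogConvexOn s f) (hg : LogConvexOn s g) :
    LogConvexOn s (fun x => f x * g x) :=
  ⟨fun x hx => mul_pos (hf.pos x hx) (hg.pos x hx),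
    (hf.convexOn_log.add hg.convexOn_log).congr fun x hx =>
      (log_mul (hf.pos x hx).ne' (hg.pos x hx).ne').symm⟩

theorem add (hf : LogConvexOn s f) (hg : LogConvexOn s g) :
    LogConvexOn s (fun x => f x + g x) := by
  refine of_le_rpow_mul_rpow hf.convexOn_log.1
    (fun x hx => add_pos (hf.pos x hx) (hg.pos x hx)) fun x hx y hy a b ha hb hab => ?_
  calc f (a • x + b • y) + g (a • x + b • y)
      ≤ f x ^ a * f y ^ b + g x ^ a * g y ^ b :=
        add_le_add (hf.le_rpow_mul_rpow hx hy ha hb hab) (hg.le_rpow_mul_rpow hx hy ha hb hab)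
    _ ≤ (f x + g x) ^ a * (f y + g y) ^ b :=
        rpow_mul_rpow_add_rpow_mul_rpow_le (hf.pos x hx) (hg.pos x hx) (hf.pos y hy)
          (hg.pos y hy) ha hb hab

theorem prod {ι : Type*} (hs : Convex ℝ s) (t : Finset ι) {F : ι → E → ℝ}
    (hF : ∀ i ∈ t, LogConvexOn s (F i)) : LogConvexOn s (fun x => ∏ i ∈ t, F i x) := by
  classical
  induction t using Finset.induction_on with
  | empty => simpa only [prod_empty] using const hs one_pos
  | insert j t hj ih =>
    simp only [prod_insert hj]
    exact (hF j (mem_insert_self j t)).mul (ih fun i hi => hF i (mem_insert_of_mem hi))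

theorem sum {ι : Type*} {t : Finset ι} (ht : t.Nonempty) {F : ι → E → ℝ}
    (hF : ∀ i ∈ t, LogConvexOn s (F i)) : LogConvexOn s (fun x => ∑ i ∈ t, F i x) := by
  induction ht using Finset.Nonempty.cons_induction with
  | singleton j => simpa only [sum_singleton] using hF j (mem_singleton_self j)
  | cons j t hj _ ih =>
    simp only [sum_cons]
    exact (hF j (mem_cons_self j t)).add (ih fun i hi => hF i (mem_cons_of_mem hi))

end LogConvexOn

/-- `F(x) = ln θ(eˣ)` is convex on `ℝ`, where `θ` is the numerator polynomial of the MRC SINR. -/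
theorem log_theta_exp_convexOn {ι : Type*} [DecidableEq ι] (M : Finset ι) (hM : M.Nonempty)
    (K : ℝ) (hK : 0 < K) (β : ι → ℝ) (hβ : ∀ m ∈ M, 0 < β m) :
    ConvexOn ℝ Set.univ (fun x : ℝ =>
      Real.log (K * Real.exp x *
        ∑ m ∈ M, (β m) ^ 2 * ∏ n ∈ M.erase m, (K * β n * Real.exp x + 1))) := by
  have hconst : ∀ c : ℝ, 0 < c → LogConvexOn Set.univ (fun _ : ℝ => c) :=
    fun _ hc => LogConvexOn.const convex_univ hc
  have hexp : LogConvexOn Set.univ exp := (convexOn_id convex_univ).logConvexOn_exp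
  have hfactor : ∀ n ∈ M, LogConvexOn Set.univ (fun x => K * β n * exp x + 1) := fun n hn =>
    ((hconst _ (mul_pos hK (hβ n hn))).mul hexp).add (hconst 1 one_pos)
  have hsum : LogConvexOn Set.univ
      (fun x => ∑ m ∈ M, β m ^ 2 * ∏ n ∈ M.erase m, (K * β n * exp x + 1)) :=
    LogConvexOn.sum hM fun m hm => (hconst _ (pow_pos (hβ m hm) 2)).mul
      (LogConvexOn.prod convex_univ _ fun n hn => hfactor n (mem_of_mem_erase hn))
  exact (((hconst K hK).mul hexp).mul hsum).convexOn_log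
end

section
/- Let M be a nonempty finite index set, K > 0 a real constant, and for each m ∈ M let β_m > 0. Then the function x ↦ ln(K·e^x) + 2·ln(Σ_{m∈M} β_m·Π_{n∈M, n≠m} √(K·β_n·e^x + 1)) is convex on ℝ; that is, the logarithm of ϖ(p)² = (Σ_{m∈M} √(K·p·β_m²)·Π_{n∈M, n≠m} √(K·p·β_n + 1))² is a convex function of x = ln(p). -/
/-!
A positive function is log-convex when its logarithm is convex. Log-convexity is preserved
by products and square roots, which the logarithm turns into sums and halvings, and by sums,
which is Hölder's inequality `∑ uᵢ ^ a vᵢ ^ b ≤ (∑ uᵢ) ^ a (∑ vᵢ) ^ b`. Hence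
`x ↦ K βₙ eˣ + 1` is log-convex, and so is `Σₘ βₘ Πₙ √(K βₙ eˣ + 1)`, while
`log (K eˣ) = log K + x` is affine.
-/

open Real Set Finset

theorem Real.sum_rpow_mul_rpow_le {ι : Type*} (t : Finset ι) {u v : ι → ℝ}
    (hu : ∀ i ∈ t, 0 ≤ u i) (hv : ∀ i ∈ t, 0 ≤ v i) {a b : ℝ} (ha : 0 < a)
    (hb : 0 < b) (hab : a + b = 1) :
    ∑ i ∈ t, u i ^ a * v i ^ b ≤ (∑ i ∈ t, u i) ^ a * (∑ i ∈ t, v i) ^ b := by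
  have h := inner_le_Lp_mul_Lq_of_nonneg t (holderConjugate_one_div ha hb hab)
    (fun i hi => rpow_nonneg (hu i hi) a) (fun i hi => rpow_nonneg (hv i hi) b)
  simp only [one_div, inv_inv] at h
  rwa [sum_congr rfl fun i hi => rpow_rpow_inv (hu i hi) ha.ne',
    sum_congr rfl fun i hi => rpow_rpow_inv (hv i hi) hb.ne'] at h

section LogConvex

variable {E ι : Type*} [AddCommMonoid E] [Module ℝ E] {s : Set E} {f g : E → ℝ}

def LogConvexOn_s17 (s : Set E) (f : E → ℝ) : Prop :=
  (∀ x ∈ s, 0 < f x) ∧ ConvexOn ℝ s fun x => log (f x)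

theorem logConvexOn_iff :
    LogConvexOn_s17 s f ↔ (∀ x ∈ s, 0 < f x) ∧ Convex ℝ s ∧
      ∀ ⦃x⦄, x ∈ s → ∀ ⦃y⦄, y ∈ s → ∀ ⦃a b : ℝ⦄, 0 < a → 0 < b → a + b = 1 →
        f (a • x + b • y) ≤ f x ^ a * f y ^ b := by
  refine and_congr_right fun hpos => ?_
  rw [convexOn_iff_forall_pos]
  refine and_congr_right fun hs =>
    forall₄_congr fun x hx y hy => forall₅_congr fun a b ha hb hab => ?_
  have hxy : a • x + b • y ∈ s := hs hx hy ha.le hb.le hab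
  have hx' := hpos x hx
  have hy' := hpos y hy
  rw [← log_le_log_iff (hpos _ hxy) (by positivity),
    log_mul (by positivity) (by positivity), log_rpow hx', log_rpow hy', smul_eq_mul, smul_eq_mul]

theorem LogConvexOn_s17.const {c : ℝ} (hc : 0 < c) (hs : Convex ℝ s) :
    LogConvexOn_s17 s fun _ => c :=
  ⟨fun _ _ => hc, convexOn_const _ hs⟩

theorem logConvexOn_const_mul_exp {c : ℝ} (hc : 0 < c) :
    LogConvexOn_s17 univ fun x => c * exp x := by
  refine ⟨fun x _ => by positivity, ?_⟩
  refine ((convexOn_id convex_univ).add_const (log c)).congr fun x _ => ?_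
  rw [log_mul hc.ne' (exp_ne_zero x), log_exp]
  exact add_comm _ _

theorem LogConvexOn_s17.mul (hf : LogConvexOn_s17 s f) (hg : LogConvexOn_s17 s g) :
    LogConvexOn_s17 s fun x => f x * g x := by
  refine ⟨fun x hx => mul_pos (hf.1 x hx) (hg.1 x hx), (hf.2.add hg.2).congr fun x hx => ?_⟩
  rw [Pi.add_apply, log_mul (hf.1 x hx).ne' (hg.1 x hx).ne']

theorem LogConvexOn_s17.prod {t : Finset ι} {f : ι → E → ℝ} (hs : Convex ℝ s)
    (hf : ∀ i ∈ t, LogConvexOn_s17 s (f i)) :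
    LogConvexOn_s17 s fun x => ∏ i ∈ t, f i x := by
  classical
  induction t using Finset.induction_on with
  | empty => simpa only [Finset.prod_empty] using LogConvexOn_s17.const one_pos hs
  | insert i t hi ih =>
    simp only [Finset.prod_insert hi]
    exact (hf i (mem_insert_self i t)).mul (ih fun j hj => hf j (mem_insert_of_mem hj))

theorem LogConvexOn_s17.sqrt (hf : LogConvexOn_s17 s f) : LogConvexOn_s17 s fun x => √(f x) := by
  refine ⟨fun x hx => sqrt_pos.2 (hf.1 x hx),
    (hf.2.smul (by norm_num : (0 : ℝ) ≤ 1 / 2)).congr fun x hx => ?_⟩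
  simp only [log_sqrt (hf.1 x hx).le, smul_eq_mul]
  ring

theorem LogConvexOn_s17.sum {t : Finset ι} (ht : t.Nonempty) {f : ι → E → ℝ}
    (hf : ∀ i ∈ t, LogConvexOn_s17 s (f i)) :
    LogConvexOn_s17 s fun x => ∑ i ∈ t, f i x := by
  simp only [logConvexOn_iff] at hf ⊢
  obtain ⟨i₀, hi₀⟩ := ht
  refine ⟨fun x hx => sum_pos (fun i hi => (hf i hi).1 x hx) ⟨i₀, hi₀⟩, (hf i₀ hi₀).2.1,
    fun x hx y hy a b ha hb hab => ?_⟩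
  calc ∑ i ∈ t, f i (a • x + b • y)
      ≤ ∑ i ∈ t, f i x ^ a * f i y ^ b := sum_le_sum fun i hi => (hf i hi).2.2 hx hy ha hb hab
    _ ≤ (∑ i ∈ t, f i x) ^ a * (∑ i ∈ t, f i y) ^ b :=
      sum_rpow_mul_rpow_le t (fun i hi => ((hf i hi).1 x hx).le)
        (fun i hi => ((hf i hi).1 y hy).le) ha hb hab

theorem LogConvexOn_s17.add (hf : LogConvexOn_s17 s f) (hg : LogConvexOn_s17 s g) :
    LogConvexOn_s17 s fun x => f x + g x := by
  simpa only [Fin.sum_univ_two, Matrix.cons_val_zero, Matrix.cons_val_one] using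
    LogConvexOn_s17.sum (t := univ) (f := ![f, g]) univ_nonempty (by simp [Fin.forall_fin_two, hf, hg])

end LogConvex

/-- `x ↦ ln(K eˣ) + 2 ln(Σ_m β_m Π_{n≠m} √(K β_n eˣ + 1)) = ln(ϖ(eˣ)²)` is convex on `ℝ`. -/
theorem log_varpi_sq_exp_convexOn {ι : Type*} [DecidableEq ι] (M : Finset ι) (hM : M.Nonempty)
    (K : ℝ) (hK : 0 < K) (β : ι → ℝ) (hβ : ∀ m ∈ M, 0 < β m) :
    ConvexOn ℝ Set.univ (fun x : ℝ =>
      Real.log (K * Real.exp x) +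
        2 * Real.log (∑ m ∈ M, β m *
          ∏ n ∈ M.erase m, Real.sqrt (K * β n * Real.exp x + 1))) := by
  have hfactor : ∀ n ∈ M, LogConvexOn_s17 univ fun x => √(K * β n * exp x + 1) := fun n hn =>
    ((logConvexOn_const_mul_exp (mul_pos hK (hβ n hn))).add
      (LogConvexOn_s17.const one_pos convex_univ)).sqrt
  have hsum : LogConvexOn_s17 univ fun x =>
      ∑ m ∈ M, β m * ∏ n ∈ M.erase m, √(K * β n * exp x + 1) :=
    LogConvexOn_s17.sum hM fun m hm => (LogConvexOn_s17.const (hβ m hm) convex_univ).mul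
      (LogConvexOn_s17.prod convex_univ fun n hn => hfactor n (mem_of_mem_erase hn))
  exact (logConvexOn_const_mul_exp hK).2.add (hsum.2.smul zero_le_two)
end
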